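/- arXiv:2210.16783 — 5 statements merged into one kernel-verified Lean document; each statement's English description precedes it below -/
import Mathlib

section
/- For every m ≥ 1 and every k ≥ 2, the subspace Ω_{k-2}^{*,*}(CP^m)·(v_{2m}², w_{4m-1}) of Ω_k^{*,*}(CP^m) — the span of all monomials of length k divisible by v_{2m}² or by w_{4m-1} — is a subcomplex (closed under ∂), and it is acyclic: its cohomology vanishes in all degrees (the identity map of this subcomplex is chain homotopic to zero). -/
/-!
# The (reduced) Chevalley–Eilenberg complex for `ℂP^m`

We model the free graded-commutative algebra on generators
`v_0, v_2, …, v_{2m}` (even, polynomial; `v_{2i}` has degree `2i`, weight `0`, length `1`) and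
`w_{2m-1}, w_{2m+1}, …, w_{4m-1}` (odd, exterior; `w_{2m-1+2j}` has degree `2m-1+2j`,
weight `1`, length `2`) by its monomial basis: a monomial is a pair `(e, S)` where
`e : Fin (m+1) → ℕ` records the exponents of the `v`'s (`e i` is the exponent of `v_{2i}`) and
`S : Finset (Fin (m+1))` records the set of `w`'s occurring (`j ∈ S` means `w_{2m-1+2j}` occurs).
An element of the algebra is a finitely supported `ℚ`-linear combination of monomials.
The differential is the degree `+1` derivation with `∂ v_{2i} = 0` and
`∂ w_{2i-1} = ∑_{a+b=i, 0 ≤ a,b ≤ m} v_{2a} v_{2b}` (for `m ≤ i ≤ 2m`), with the usual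
Koszul signs.
-/

noncomputable section

/-- Monomials: exponents of the even generators `v_{2i}` and the set of odd generators
`w_{2m-1+2j}` occurring. -/
abbrev CEMon (m : ℕ) : Type := (Fin (m + 1) → ℕ) × Finset (Fin (m + 1))

/-- The underlying `ℚ`-vector space of the Chevalley–Eilenberg algebra for `ℂP^m`:
finitely supported linear combinations of monomials. -/
abbrev CEAlg (m : ℕ) : Type := CEMon m →₀ ℚ

/-- Cohomological degree of a monomial: `v_{2i}` has degree `2i` and `w_{2m-1+2j}` has
degree `2m - 1 + 2j`. -/
def CEdeg (m : ℕ) (b : CEMon m) : ℕ :=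
  (∑ i : Fin (m + 1), 2 * i.val * b.1 i) + ∑ j ∈ b.2, (2 * m + 2 * j.val - 1)

/-- Length of a monomial: each `v` has length `1`, each `w` has length `2`. -/
def CElen (m : ℕ) (b : CEMon m) : ℕ := (∑ i : Fin (m + 1), b.1 i) + 2 * b.2.card

/-- Weight of a monomial: each `v` has weight `0`, each `w` has weight `1`. -/
def CEwt (m : ℕ) (b : CEMon m) : ℕ := b.2.card

/-- The differential on a monomial: apply `∂ w_{2(m+j)-1} = ∑_{a+b=m+j, 0 ≤ a,b ≤ m} v_{2a} v_{2b}`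
to each odd factor in turn, with the Koszul sign `(-1)^{#{l ∈ S | l < j}}` (writing the odd
factors in increasing order). -/
def CEdMon (m : ℕ) (b : CEMon m) : CEAlg m :=
  ∑ j ∈ b.2, ∑ a : Fin (m + 1),
    if h : j.val ≤ a.val then
      Finsupp.single
        (b.1 + Pi.single a 1 + Pi.single (⟨m + j.val - a.val, by omega⟩ : Fin (m + 1)) 1,
          b.2.erase j)
        ((-1 : ℚ) ^ (b.2.filter (fun l => l < j)).card)
    else 0

/-- The Chevalley–Eilenberg differential `∂`, as a linear map. -/
def CEd (m : ℕ) : CEAlg m →ₗ[ℚ] CEAlg m :=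
  Finsupp.lift (CEAlg m) ℚ (CEMon m) (CEdMon m)

/-- `Ω_k^{i,ω}(ℂP^m)`: the span of the monomials of length `k`, cohomological degree `i` and
weight `ω`. -/
def CEOmega (m k i ω : ℕ) : Submodule ℚ (CEAlg m) :=
  Finsupp.supported ℚ ℚ {b : CEMon m | CElen m b = k ∧ CEdeg m b = i ∧ CEwt m b = ω}

/-- A monomial is *bad* if it is divisible by `v_{2m}²` or by `w_{4m-1}`. -/
def CEBad (m : ℕ) (b : CEMon m) : Prop :=
  2 ≤ b.1 (Fin.last m) ∨ Fin.last m ∈ b.2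

open Classical in
/-- The projection of the Chevalley–Eilenberg algebra onto the span of the *good* monomials
(those not divisible by `v_{2m}²` nor by `w_{4m-1}`), annihilating the bad monomials.  The span
of the good monomials is canonically identified with the quotient of the algebra by the span of
the bad monomials. -/
def CEproj (m : ℕ) : CEAlg m →ₗ[ℚ] CEAlg m :=
  Finsupp.lift (CEAlg m) ℚ (CEMon m)
    (fun b => if CEBad m b then 0 else Finsupp.single b (1 : ℚ))

/-- The induced differential on the reduced complex `ʳΩ` (realized as the span of the good
monomials, canonically identified with the quotient by the span of the bad monomials). -/
def CErd (m : ℕ) : CEAlg m →ₗ[ℚ] CEAlg m := (CEproj m).comp (CEd m)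

/-- `ʳΩ_k^{i,ω}(ℂP^m)`: the reduced complex (the quotient of `Ω_k^{i,ω}(ℂP^m)` by the span of
the bad monomials, realized as the span of the good monomials of length `k`, degree `i` and
weight `ω`). -/
def CErOmega (m k i ω : ℕ) : Submodule ℚ (CEAlg m) :=
  Finsupp.supported ℚ ℚ
    {b : CEMon m | ¬ CEBad m b ∧ CElen m b = k ∧ CEdeg m b = i ∧ CEwt m b = ω}

/-- The degree-`i` part of the reduced complex `ʳΩ_k^{*,*}(ℂP^m)` (all weights together). -/
def CErOmegaDeg (m k i : ℕ) : Submodule ℚ (CEAlg m) :=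
  Finsupp.supported ℚ ℚ {b : CEMon m | ¬ CEBad m b ∧ CElen m b = k ∧ CEdeg m b = i}

/-- Cocycles of degree `i` in the reduced complex `ʳΩ_k^{*,*}(ℂP^m)`. -/
def CErCocycles (m k i : ℕ) : Submodule ℚ (CEAlg m) :=
  CErOmegaDeg m k i ⊓ LinearMap.ker (CErd m)

/-- The degree-`i` cohomology of the reduced complex `ʳΩ_k^{*,*}(ℂP^m)`:
cocycles of degree `i` modulo the image of the degree-`(i-1)` part under the differential. -/
abbrev CErCohomology (m k i : ℕ) : Type :=
  CErCocycles m k i ⧸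
    Submodule.comap (CErCocycles m k i).subtype
      (Submodule.map (CErd m) (CErOmegaDeg m k (i - 1)))

end


/-!
Since `∂ w_{4m-1} = v_{2m}²`, exchanging `v_{2m}²` for `w_{4m-1}` is a contracting homotopy `h`
of the bad subcomplex: `h b = ± (b / v_{2m}²) w_{4m-1}` when `v_{2m}² ∣ b` and `w_{4m-1} ∤ b`, and
`h b = 0` otherwise. If `w_{4m-1} ∣ b`, the only term of `∂ b` that `h` does not kill is the one
contracting `w_{4m-1}`, and `h` sends it back to `b`. Otherwise the term of `∂ (h b)` contracting
`w_{4m-1}` is `b`, while the other terms cancel those of `h (∂ b)`, because exchanging commutes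
with contracting any other odd generator. So `∂ h + h ∂ = id` on bad monomials, and every bad
cocycle `x` is the coboundary of `h x`.
-/

namespace Finsupp

variable {α R M : Type*} [Semiring R] [AddCommMonoid M] [Module R M] {s : Set α}

theorem lift_apply_mem_of_mem_supported {p : Submodule R M} {f : α → M}
    (hf : ∀ b ∈ s, f b ∈ p) {x : α →₀ R} (hx : x ∈ supported R R s) :
    lift M R α f x ∈ p := by
  rw [lift_apply]
  exact Submodule.finsuppSum_mem _ _ _ _ fun b hb =>
    p.smul_mem _ (hf b (hx (mem_support_iff.mpr hb)))

theorem eqOn_supported_of_single {f g : (α →₀ R) →ₗ[R] M}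
    (h : ∀ b ∈ s, f (single b 1) = g (single b 1)) : Set.EqOn f g (supported R R s) := by
  rw [supported_eq_span_single]
  exact LinearMap.eqOn_span' (by rintro _ ⟨b, hb, rfl⟩; exact h b hb)

end Finsupp

theorem Finset.sum_mul_add_pi_single {ι R : Type*} [Fintype ι] [DecidableEq ι]
    [NonUnitalNonAssocSemiring R] (w e : ι → R) (a : ι) (c : R) :
    ∑ x, w x * (e + Pi.single a c : ι → R) x = ∑ x, w x * e x + w a * c := by
  simp [mul_add, Finset.sum_add_distrib, Pi.single_apply]

variable {m : ℕ}

lemma filter_lt_last_eq_erase (S : Finset (Fin (m + 1))) :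
    S.filter (· < Fin.last m) = S.erase (Fin.last m) := by
  ext x
  simp [Fin.lt_last_iff_ne_last, and_comm]

lemma sub_add_single_last {e : Fin (m + 1) → ℕ} (h2 : 2 ≤ e (Fin.last m)) :
    e - Pi.single (Fin.last m) 2 + Pi.single (Fin.last m) 2 = e := by
  funext x
  by_cases hx : x = Fin.last m
  · subst hx; simp; omega
  · simp [hx]

lemma CEd_single (b : CEMon m) (c : ℚ) : CEd m (Finsupp.single b c) = c • CEdMon m b := by
  simp [CEd]

/-- The monomial `b · v_{2a} v_{2c} / w_{2(m+j)-1}` with `a + c = m + j`. -/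
def CEcontract (b : CEMon m) (j a : Fin (m + 1)) (h : j.val ≤ a.val) : CEMon m :=
  (b.1 + Pi.single a 1 + Pi.single (⟨m + j.val - a.val, by omega⟩ : Fin (m + 1)) 1, b.2.erase j)

@[simp]
lemma CEcontract_snd (b : CEMon m) (j a : Fin (m + 1)) (h : j.val ≤ a.val) :
    (CEcontract b j a h).2 = b.2.erase j := rfl

noncomputable def CEdTerm (b : CEMon m) (j a : Fin (m + 1)) : CEAlg m :=
  if h : j.val ≤ a.val then
    Finsupp.single (CEcontract b j a h) ((-1 : ℚ) ^ (b.2.filter (fun l => l < j)).card)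
  else 0

lemma CEdMon_eq_sum (b : CEMon m) : CEdMon m b = ∑ j ∈ b.2, ∑ a, CEdTerm b j a := rfl

lemma CElen_CEcontract {b : CEMon m} {j a : Fin (m + 1)} (h : j.val ≤ a.val) (hj : j ∈ b.2) :
    CElen m (CEcontract b j a h) = CElen m b := by
  have := Finset.card_erase_add_one hj
  simp [CElen, CEcontract, Finset.sum_add_distrib]
  omega

lemma CEdeg_CEcontract (hm : 1 ≤ m) {b : CEMon m} {j a : Fin (m + 1)} (h : j.val ≤ a.val)
    (hj : j ∈ b.2) : CEdeg m (CEcontract b j a h) = CEdeg m b + 1 := by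
  have := Finset.sum_erase_add _ (fun l : Fin (m + 1) => 2 * m + 2 * l.val - 1) hj
  simp only [CEdeg, CEcontract]
  rw [Finset.sum_mul_add_pi_single (fun x : Fin (m + 1) => 2 * x.val),
    Finset.sum_mul_add_pi_single (fun x : Fin (m + 1) => 2 * x.val)]
  dsimp only
  omega

lemma CEBad_CEcontract {b : CEMon m} {j a : Fin (m + 1)} (h : j.val ≤ a.val) (hj : j ∈ b.2)
    (hb : CEBad m b) : CEBad m (CEcontract b j a h) := by
  rcases hb with h2 | hl
  · left
    simp only [CEcontract, Pi.add_apply]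
    omega
  · by_cases hjl : j = Fin.last m
    · subst hjl
      have ha : a = Fin.last m := Fin.ext (by simp at h ⊢; omega)
      subst ha
      left
      simp [CEcontract, Fin.last]
    · exact Or.inr (Finset.mem_erase.mpr ⟨fun h' => hjl h'.symm, hl⟩)

lemma CEdMon_mem_supported (hm : 1 ≤ m) {k i : ℕ} {b : CEMon m}
    (hb : CEBad m b ∧ CElen m b = k ∧ CEdeg m b = i) :
    CEdMon m b ∈ Finsupp.supported ℚ ℚ
      {b' : CEMon m | CEBad m b' ∧ CElen m b' = k ∧ CEdeg m b' = i + 1} := by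
  rw [CEdMon_eq_sum]
  refine Submodule.sum_mem _ fun j hj => Submodule.sum_mem _ fun a _ => ?_
  unfold CEdTerm
  split_ifs with h
  · exact Finsupp.single_mem_supported ℚ _
      ⟨CEBad_CEcontract h hj hb.1, (CElen_CEcontract h hj).trans hb.2.1,
        (CEdeg_CEcontract hm h hj).trans (congrArg (· + 1) hb.2.2)⟩
  · exact zero_mem _

/-- The monomial `b · w_{4m-1} / v_{2m}²`. -/
def CEexchange (b : CEMon m) : CEMon m :=
  (b.1 - Pi.single (Fin.last m) 2, insert (Fin.last m) b.2)

@[simp]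
lemma CEexchange_snd (b : CEMon m) : (CEexchange b).2 = insert (Fin.last m) b.2 := rfl

/-- The sign is the Koszul sign of `w_{4m-1}`, which comes last among the odd factors. -/
noncomputable def CEhMon (m : ℕ) (b : CEMon m) : CEAlg m :=
  if 2 ≤ b.1 (Fin.last m) ∧ Fin.last m ∉ b.2 then
    Finsupp.single (CEexchange b) ((-1 : ℚ) ^ b.2.card)
  else 0

noncomputable def CEh (m : ℕ) : CEAlg m →ₗ[ℚ] CEAlg m :=
  Finsupp.lift (CEAlg m) ℚ (CEMon m) (CEhMon m)

lemma CEh_single (b : CEMon m) (c : ℚ) : CEh m (Finsupp.single b c) = c • CEhMon m b := by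
  simp [CEh]

lemma CElen_CEexchange {b : CEMon m} (h2 : 2 ≤ b.1 (Fin.last m)) (hl : Fin.last m ∉ b.2) :
    CElen m (CEexchange b) = CElen m b := by
  have hv := Finset.sum_mul_add_pi_single 1 (b.1 - Pi.single (Fin.last m) 2) (Fin.last m) 2
  simp only [sub_add_single_last h2, Pi.one_apply, one_mul] at hv
  simp only [CElen, CEexchange, Finset.card_insert_of_notMem hl, hv]
  omega

lemma CEdeg_CEexchange (hm : 1 ≤ m) {b : CEMon m} (h2 : 2 ≤ b.1 (Fin.last m))
    (hl : Fin.last m ∉ b.2) : CEdeg m (CEexchange b) + 1 = CEdeg m b := by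
  have hv := Finset.sum_mul_add_pi_single (fun x : Fin (m + 1) => 2 * x.val)
    (b.1 - Pi.single (Fin.last m) 2) (Fin.last m) 2
  simp only [sub_add_single_last h2, Fin.val_last] at hv
  simp only [CEdeg, CEexchange, Finset.sum_insert hl, Fin.val_last, hv]
  omega

lemma CEhMon_mem_supported (hm : 1 ≤ m) {k i : ℕ} {b : CEMon m}
    (hb : CEBad m b ∧ CElen m b = k ∧ CEdeg m b = i) :
    CEhMon m b ∈ Finsupp.supported ℚ ℚ
      {b' : CEMon m | CEBad m b' ∧ CElen m b' = k ∧ CEdeg m b' = i - 1} := by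
  unfold CEhMon
  split_ifs with h
  · have := CEdeg_CEexchange hm h.1 h.2
    exact Finsupp.single_mem_supported ℚ _
      ⟨Or.inr (Finset.mem_insert_self _ _), (CElen_CEexchange h.1 h.2).trans hb.2.1, by omega⟩
  · exact zero_mem _

lemma CEcontract_last (b : CEMon m) :
    CEcontract b (Fin.last m) (Fin.last m) le_rfl =
      (b.1 + Pi.single (Fin.last m) 2, b.2.erase (Fin.last m)) := by
  refine Prod.ext (funext fun x => ?_) rfl
  simp only [CEcontract, Pi.add_apply, Pi.single_apply, Fin.val_last, Nat.add_sub_cancel]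
  split_ifs <;> simp_all [Fin.ext_iff]

lemma CEexchange_CEcontract_last {b : CEMon m} (hl : Fin.last m ∈ b.2) :
    CEexchange (CEcontract b (Fin.last m) (Fin.last m) le_rfl) = b := by
  rw [CEcontract_last, CEexchange, add_tsub_cancel_right, Finset.insert_erase hl]

lemma CEcontract_last_CEexchange {b : CEMon m} (h2 : 2 ≤ b.1 (Fin.last m))
    (hl : Fin.last m ∉ b.2) :
    CEcontract (CEexchange b) (Fin.last m) (Fin.last m) le_rfl = b := by
  rw [CEcontract_last, CEexchange, sub_add_single_last h2, Finset.erase_insert hl]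

lemma CEexchange_CEcontract_comm {b : CEMon m} {j a : Fin (m + 1)} (h : j.val ≤ a.val)
    (h2 : 2 ≤ b.1 (Fin.last m)) (hj : j ≠ Fin.last m) :
    CEexchange (CEcontract b j a h) = CEcontract (CEexchange b) j a h := by
  refine Prod.ext (funext fun x => ?_) (Finset.erase_insert_of_ne hj.symm).symm
  by_cases hx : x = Fin.last m
  · subst hx
    simp only [CEexchange, CEcontract, Pi.add_apply, Pi.sub_apply, Pi.single_apply]
    split_ifs <;> omega
  · simp [CEexchange, CEcontract, hx]

lemma sum_CEdTerm_last (b : CEMon m) :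
    ∑ a, CEdTerm b (Fin.last m) a =
      Finsupp.single (CEcontract b (Fin.last m) (Fin.last m) le_rfl)
        ((-1 : ℚ) ^ (b.2.erase (Fin.last m)).card) := by
  rw [Fintype.sum_eq_single (Fin.last m) fun a ha =>
    dif_neg fun h => ha (Fin.ext (by simp at h ⊢; omega))]
  rw [CEdTerm, dif_pos le_rfl, filter_lt_last_eq_erase]

lemma CEh_CEdTerm_of_last_mem {b : CEMon m} {j : Fin (m + 1)} (a : Fin (m + 1))
    (hl : Fin.last m ∈ b.2) (hj : j ≠ Fin.last m) : CEh m (CEdTerm b j a) = 0 := by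
  unfold CEdTerm
  split_ifs with h
  · rw [CEh_single, CEhMon, if_neg fun h' => h'.2 (Finset.mem_erase.mpr ⟨hj.symm, hl⟩),
      smul_zero]
  · exact map_zero _

lemma CEh_CEdTerm_of_last_notMem {b : CEMon m} {j : Fin (m + 1)} (a : Fin (m + 1))
    (h2 : 2 ≤ b.1 (Fin.last m)) (hl : Fin.last m ∉ b.2) (hj : j ∈ b.2) :
    CEh m (CEdTerm b j a) = -((-1 : ℚ) ^ b.2.card • CEdTerm (CEexchange b) j a) := by
  have hjl : j ≠ Fin.last m := fun h => hl (h ▸ hj)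
  have hfilter : (insert (Fin.last m) b.2).filter (· < j) = b.2.filter (· < j) := by
    rw [Finset.filter_insert, if_neg (not_lt.mpr (Fin.le_last j))]
  unfold CEdTerm
  split_ifs with h
  · have hcond : 2 ≤ (CEcontract b j a h).1 (Fin.last m) ∧
        Fin.last m ∉ (CEcontract b j a h).2 := by
      refine ⟨?_, fun h' => hl (Finset.mem_of_mem_erase h')⟩
      simp only [CEcontract, Pi.add_apply]
      omega
    rw [CEh_single, CEhMon, if_pos hcond, CEexchange_CEcontract_comm h h2 hjl, CEexchange,
      hfilter, Finsupp.smul_single, Finsupp.smul_single, ← Finsupp.single_neg, CEcontract_snd,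
      ← Finset.card_erase_add_one hj, smul_eq_mul, smul_eq_mul, pow_succ]
    congr 1
    ring
  · simp

lemma CEh_CEdMon_of_last_mem {b : CEMon m} (hl : Fin.last m ∈ b.2) :
    CEh m (CEdMon m b) = Finsupp.single b 1 := by
  rw [CEdMon_eq_sum, map_sum, Finset.sum_eq_single_of_mem _ hl fun j _ hj => by
    rw [map_sum]; exact Finset.sum_eq_zero fun a _ => CEh_CEdTerm_of_last_mem a hl hj]
  rw [sum_CEdTerm_last, CEh_single, CEhMon, if_pos (by simp [CEcontract_last]),
    CEexchange_CEcontract_last hl, Finsupp.smul_single, smul_eq_mul, CEcontract_snd, ← mul_pow]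
  norm_num

lemma CEd_CEhMon_add_CEh_CEdMon {b : CEMon m} (h2 : 2 ≤ b.1 (Fin.last m))
    (hl : Fin.last m ∉ b.2) :
    CEd m (CEhMon m b) + CEh m (CEdMon m b) = Finsupp.single b 1 := by
  have hsum : CEh m (CEdMon m b) =
      -((-1 : ℚ) ^ b.2.card • ∑ j ∈ b.2, ∑ a, CEdTerm (CEexchange b) j a) := by
    simp only [CEdMon_eq_sum, map_sum, Finset.smul_sum, ← Finset.sum_neg_distrib]
    exact Finset.sum_congr rfl fun j hj =>
      Finset.sum_congr rfl fun a _ => CEh_CEdTerm_of_last_notMem a h2 hl hj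
  rw [hsum, CEhMon, if_pos ⟨h2, hl⟩, CEd_single, CEdMon_eq_sum, CEexchange_snd,
    Finset.sum_insert hl, smul_add, add_neg_cancel_right, sum_CEdTerm_last,
    CEcontract_last_CEexchange h2 hl, CEexchange_snd, Finset.erase_insert hl,
    Finsupp.smul_single, smul_eq_mul, ← mul_pow]
  norm_num

lemma CEd_CEh_add_CEh_CEd_single {b : CEMon m} (hb : CEBad m b) :
    CEd m (CEh m (Finsupp.single b 1)) + CEh m (CEd m (Finsupp.single b 1)) =
      Finsupp.single b 1 := by
  rw [CEh_single, CEd_single, one_smul, one_smul]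
  by_cases hl : Fin.last m ∈ b.2
  · rw [CEhMon, if_neg fun h => h.2 hl, map_zero, zero_add, CEh_CEdMon_of_last_mem hl]
  · exact CEd_CEhMon_add_CEh_CEdMon (hb.resolve_right hl) hl

lemma CEd_CEh_add_CEh_CEd {x : CEAlg m} (hx : x ∈ Finsupp.supported ℚ ℚ {b | CEBad m b}) :
    CEd m (CEh m x) + CEh m (CEd m x) = x :=
  Finsupp.eqOn_supported_of_single (f := CEd m ∘ₗ CEh m + CEh m ∘ₗ CEd m) (g := LinearMap.id)
    (fun _ hb => CEd_CEh_add_CEh_CEd_single hb) hx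

theorem bad_subcomplex_acyclic_general (m k : ℕ) (hm : 1 ≤ m) :
    (∀ i : ℕ, ∀ x ∈ Finsupp.supported ℚ ℚ
        {b : CEMon m | CEBad m b ∧ CElen m b = k ∧ CEdeg m b = i},
      CEd m x ∈ Finsupp.supported ℚ ℚ
        {b : CEMon m | CEBad m b ∧ CElen m b = k ∧ CEdeg m b = i + 1}) ∧
    (∀ i : ℕ, ∀ x ∈ Finsupp.supported ℚ ℚ
        {b : CEMon m | CEBad m b ∧ CElen m b = k ∧ CEdeg m b = i},
      CEd m x = 0 →
      ∃ y ∈ Finsupp.supported ℚ ℚ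
          {b : CEMon m | CEBad m b ∧ CElen m b = k ∧ CEdeg m b = i - 1},
        CEd m y = x) := by
  refine ⟨fun i x hx => Finsupp.lift_apply_mem_of_mem_supported
      (fun b hb => CEdMon_mem_supported hm hb) hx, fun i x hx hdx => ?_⟩
  refine ⟨CEh m x, Finsupp.lift_apply_mem_of_mem_supported
    (fun b hb => CEhMon_mem_supported hm hb) hx, ?_⟩
  have hcontract := CEd_CEh_add_CEh_CEd (Finsupp.supported_mono (fun b hb => hb.1) hx)
  rwa [hdx, map_zero, add_zero] at hcontract

/-- For every `m ≥ 1` and `k ≥ 2`, the span of the monomials of length `k`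
divisible by `v_{2m}²` or by `w_{4m-1}` is a subcomplex of `Ω_k^{*,*}(ℂP^m)` (closed under `∂`),
and it is acyclic: its cohomology vanishes in all degrees. -/
theorem bad_subcomplex_acyclic (m k : ℕ) (hm : 1 ≤ m) (hk : 2 ≤ k) :
    (∀ i : ℕ, ∀ x ∈ Finsupp.supported ℚ ℚ
        {b : CEMon m | CEBad m b ∧ CElen m b = k ∧ CEdeg m b = i},
      CEd m x ∈ Finsupp.supported ℚ ℚ
        {b : CEMon m | CEBad m b ∧ CElen m b = k ∧ CEdeg m b = i + 1}) ∧
    (∀ i : ℕ, ∀ x ∈ Finsupp.supported ℚ ℚ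
        {b : CEMon m | CEBad m b ∧ CElen m b = k ∧ CEdeg m b = i},
      CEd m x = 0 →
      ∃ y ∈ Finsupp.supported ℚ ℚ
          {b : CEMon m | CEBad m b ∧ CElen m b = k ∧ CEdeg m b = i - 1},
        CEd m y = x) :=
  bad_subcomplex_acyclic_general m k hm
end

section
/- For every m ≥ 1, k ≥ 1, and weight ω with 0 < ω ≤ min{⌊k/2⌋, m}, the largest cohomological degree i such that ʳΩ_k^{i,ω}(CP^m) ≠ 0 equals 4ωm - (ω² + 2ω) if k is even, ω = k/2 and k/2 ≤ m, and equals (2m-2)k - (ω² - 2ω - 2) otherwise. -/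
/-! A good monomial of length `k` and weight `ω` is `v^e · w_S` with `#S = ω`, `w_{4m-1} ∉ S`,
`∑ e = t := k - 2ω` and `e_m ≤ 1`. Its degree splits into an even part `∑ 2i·e_i`, at most
`(2m-2)t + 2·min 1 t` since at most one factor is `v_{2m}`, and an odd part
`∑_{j ∈ S} (2m+2j-1)`, at most `4ωm - ω² - 2ω` since it is largest for the `ω` top indices
`j = m-ω, …, m-1`. Both bounds are attained at once by
`v_{2m}^{min 1 t} v_{2m-2}^{t-1} · w_{4m-2ω-1} ⋯ w_{4m-3}`; the case `t = 0` is the first case of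
the formula. -/

open Finset

theorem Finsupp.supported_ne_bot_iff {α R : Type*} [Semiring R] [Nontrivial R] {s : Set α} :
    Finsupp.supported R R s ≠ ⊥ ↔ s.Nonempty := by
  refine ⟨fun h => Set.nonempty_iff_ne_empty.2 ?_, fun ⟨b, hb⟩ => ?_⟩
  · rintro rfl
    exact h Finsupp.supported_empty
  · exact (Submodule.ne_bot_iff _).2
      ⟨Finsupp.single b 1, Finsupp.single_mem_supported R 1 hb, by simp⟩

theorem Finset.two_mul_sum_add_card_mul_succ_le {T : Finset ℕ} {n : ℕ} (hT : ∀ x ∈ T, x < n) :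
    2 * ∑ x ∈ T, x + #T * (#T + 1) ≤ 2 * #T * n := by
  induction T using Finset.induction_on_max generalizing n with
  | empty => simp
  | insert a T ha ih =>
    have haT : a ∉ T := fun h => (ha a h).false
    have han : a + 1 ≤ n := hT a (mem_insert_self a T)
    have hT' := ih ha
    rw [sum_insert haT, card_insert_of_notMem haT]
    nlinarith

theorem Finset.two_mul_sum_Ico_sub_add_card_mul_succ {c n : ℕ} (hc : c ≤ n) :
    2 * ∑ x ∈ Ico (n - c) n, x + c * (c + 1) = 2 * c * n := by
  induction c with
  | zero => simp
  | succ c ih =>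
    obtain ⟨r, rfl⟩ := Nat.exists_eq_add_of_le hc
    have hr : c + 1 + r - (c + 1) = r := by omega
    have hr' : c + 1 + r - c = r + 1 := by omega
    rw [hr, sum_eq_sum_Ico_succ_bot (by omega)]
    have := ih (by omega)
    rw [hr'] at this
    nlinarith

def CEevenDeg (m : ℕ) (e : Fin (m + 1) → ℕ) : ℕ := ∑ i : Fin (m + 1), 2 * i.val * e i

def CEoddDeg (m : ℕ) (S : Finset (Fin (m + 1))) : ℕ := ∑ j ∈ S, (2 * m + 2 * j.val - 1)

theorem CEdeg_eq (m : ℕ) (b : CEMon m) : CEdeg m b = CEevenDeg m b.1 + CEoddDeg m b.2 := rfl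

section EvenDeg

variable {m : ℕ}

theorem CEevenDeg_add (e f : Fin (m + 1) → ℕ) :
    CEevenDeg m (e + f) = CEevenDeg m e + CEevenDeg m f := by
  simp only [CEevenDeg, Pi.add_apply, mul_add, sum_add_distrib]

theorem CEevenDeg_single (i : Fin (m + 1)) (c : ℕ) :
    CEevenDeg m (Pi.single i c) = 2 * i.val * c := by
  simp [CEevenDeg, Pi.single_apply]

theorem CEevenDeg_le (e : Fin (m + 1) → ℕ) :
    CEevenDeg m e ≤ (2 * m - 2) * ∑ i, e i + 2 * e (Fin.last m) := by
  rw [CEevenDeg, ← add_sum_erase _ _ (mem_univ (Fin.last m)),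
    ← add_sum_erase _ _ (mem_univ (Fin.last m)), mul_add, mul_sum]
  have hlast : 2 * (Fin.last m).val * e (Fin.last m) ≤
      (2 * m - 2) * e (Fin.last m) + 2 * e (Fin.last m) := by
    rw [Fin.val_last, ← add_mul]
    gcongr
    omega
  have hrest : ∑ i ∈ univ.erase (Fin.last m), 2 * i.val * e i ≤
      ∑ i ∈ univ.erase (Fin.last m), (2 * m - 2) * e i := by
    refine sum_le_sum fun i hi => Nat.mul_le_mul_right _ ?_
    have := Fin.val_lt_last (ne_of_mem_erase hi)
    omega
  omega

end EvenDeg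

section OddDeg

variable {m : ℕ}

theorem CEoddDeg_add_card {S : Finset (Fin (m + 1))} (hS : Fin.last m ∉ S) :
    CEoddDeg m S + #S = 2 * #S * m + 2 * ∑ x ∈ S.map Fin.valEmbedding, x := by
  have hj : ∀ j ∈ S, 2 * m + 2 * j.val - 1 + 1 = 2 * m + 2 * j.val := fun j hj => by
    have := Fin.val_lt_last (ne_of_mem_of_not_mem hj hS)
    omega
  rw [CEoddDeg, card_eq_sum_ones, ← sum_add_distrib, sum_congr rfl hj, sum_add_distrib,
    sum_const, smul_eq_mul, ← mul_sum, sum_map]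
  simp only [Fin.valEmbedding_apply, ← card_eq_sum_ones]
  ring

theorem CEoddDeg_add_card_mul_le {S : Finset (Fin (m + 1))} (hS : Fin.last m ∉ S) :
    CEoddDeg m S + #S * (#S + 2) ≤ 4 * #S * m := by
  have hT : ∀ x ∈ S.map Fin.valEmbedding, x < m := by
    simp only [mem_map, Fin.valEmbedding_apply]
    rintro _ ⟨j, hj, rfl⟩
    exact Fin.val_lt_last (ne_of_mem_of_not_mem hj hS)
  have hsum := two_mul_sum_add_card_mul_succ_le hT
  rw [card_map] at hsum
  nlinarith [CEoddDeg_add_card hS]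

def CEtopOdd (m ω : ℕ) : Finset (Fin (m + 1)) := Ico ⟨m - ω, by omega⟩ (Fin.last m)

theorem last_notMem_CEtopOdd (ω : ℕ) : Fin.last m ∉ CEtopOdd m ω := by
  simp [CEtopOdd]

theorem card_CEtopOdd {ω : ℕ} (h : ω ≤ m) : #(CEtopOdd m ω) = ω := by
  simp only [CEtopOdd, Fin.card_Ico, Fin.val_last]
  omega

theorem CEoddDeg_CEtopOdd_add {ω : ℕ} (h : ω ≤ m) :
    CEoddDeg m (CEtopOdd m ω) + ω * (ω + 2) = 4 * ω * m := by
  have hsum := two_mul_sum_Ico_sub_add_card_mul_succ h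
  have hmap : (CEtopOdd m ω).map Fin.valEmbedding = Ico (m - ω) m := by
    rw [CEtopOdd, Fin.map_valEmbedding_Ico, Fin.val_last]
  have hodd := CEoddDeg_add_card (last_notMem_CEtopOdd (m := m) ω)
  rw [hmap, card_CEtopOdd h] at hodd
  nlinarith

end OddDeg

section EvenWitness

variable {m : ℕ}

def CEtopEven (m t : ℕ) : Fin (m + 1) → ℕ :=
  Pi.single (Fin.last m) (min 1 t) + Pi.single ⟨m - 1, by omega⟩ (t - 1)

theorem sum_CEtopEven (t : ℕ) : ∑ i, CEtopEven m t i = t := by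
  simp only [CEtopEven, Pi.add_apply, sum_add_distrib, sum_pi_single', mem_univ, if_true]
  omega

theorem CEtopEven_last (hm : 1 ≤ m) (t : ℕ) : CEtopEven m t (Fin.last m) = min 1 t := by
  have : (⟨m - 1, by omega⟩ : Fin (m + 1)) ≠ Fin.last m := by
    simp only [ne_eq, Fin.ext_iff, Fin.val_last]; omega
  simp [CEtopEven, Pi.single_eq_of_ne' this]

theorem CEevenDeg_CEtopEven (hm : 1 ≤ m) (t : ℕ) :
    CEevenDeg m (CEtopEven m t) = (2 * m - 2) * t + 2 * min 1 t := by
  obtain ⟨n, rfl⟩ := Nat.exists_eq_add_of_le' hm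
  rw [CEtopEven, CEevenDeg_add, CEevenDeg_single, CEevenDeg_single, Fin.val_last]
  rcases t with _ | s
  · simp
  · simp only [show 2 * (n + 1) - 2 = 2 * n by omega, Nat.add_sub_cancel,
      show min 1 (s + 1) = 1 by omega]
    ring

end EvenWitness

def CEmaxDeg (m k ω : ℕ) : ℕ :=
  (4 * ω * m - ω * (ω + 2)) + ((2 * m - 2) * (k - 2 * ω) + 2 * min 1 (k - 2 * ω))

theorem CEdeg_le_CEmaxDeg {m k ω : ℕ} {b : CEMon m} (hb : ¬ CEBad m b) (hlen : CElen m b = k)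
    (hwt : CEwt m b = ω) : CEdeg m b ≤ CEmaxDeg m k ω := by
  obtain ⟨e, S⟩ := b
  simp only [CEBad, not_or, not_le, CElen, CEwt] at hb hlen hwt
  subst hwt
  have hodd := CEoddDeg_add_card_mul_le hb.2
  have heven := CEevenDeg_le e
  have hlast : e (Fin.last m) ≤ ∑ i, e i := single_le_sum (by simp) (mem_univ _)
  obtain ⟨t, ht⟩ : ∃ t, ∑ i, e i = t := ⟨_, rfl⟩
  obtain rfl : k = t + 2 * #S := by omega
  rw [CEdeg_eq, CEmaxDeg, Nat.add_sub_cancel]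
  rw [ht] at heven hlast
  dsimp only
  generalize 4 * #S * m = A at *
  generalize #S * (#S + 2) = c at *
  generalize (2 * m - 2) * t = d at *
  omega

theorem exists_CEdeg_eq_CEmaxDeg {m k ω : ℕ} (hm : 1 ≤ m) (hω : ω ≤ min (k / 2) m) :
    ∃ b : CEMon m,
      ¬ CEBad m b ∧ CElen m b = k ∧ CEdeg m b = CEmaxDeg m k ω ∧ CEwt m b = ω := by
  have hωm : ω ≤ m := hω.trans (min_le_right _ _)
  have hωk : 2 * ω ≤ k := by omega
  refine ⟨(CEtopEven m (k - 2 * ω), CEtopOdd m ω), ?_, ?_, ?_, card_CEtopOdd hωm⟩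
  · simp only [CEBad, CEtopEven_last hm, not_or]
    exact ⟨by omega, last_notMem_CEtopOdd ω⟩
  · simp only [CElen, sum_CEtopEven, card_CEtopOdd hωm]
    omega
  · have := CEoddDeg_CEtopOdd_add hωm
    rw [CEdeg_eq, CEmaxDeg, CEevenDeg_CEtopEven hm]
    dsimp only
    omega

theorem CEmaxDeg_cast {m k ω : ℕ} (hm : 1 ≤ m) (hω : ω ≤ min (k / 2) m) :
    (CEmaxDeg m k ω : ℤ) =
      if Even k ∧ ω = k / 2 ∧ k / 2 ≤ m then
        4 * (ω : ℤ) * m - ((ω : ℤ) ^ 2 + 2 * ω)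
      else
        (2 * (m : ℤ) - 2) * k - ((ω : ℤ) ^ 2 - 2 * ω - 2) := by
  have hωm : ω ≤ m := hω.trans (min_le_right _ _)
  have hωk : 2 * ω ≤ k := by omega
  have hA : ω * (ω + 2) ≤ 4 * ω * m := by nlinarith
  rw [CEmaxDeg]
  split_ifs with h
  · have ht : k - 2 * ω = 0 := by
      obtain ⟨⟨c, rfl⟩, rfl, -⟩ := h
      omega
    rw [ht, min_eq_right (Nat.zero_le 1)]
    push_cast [Nat.cast_sub hA]
    ring
  · have ht : 1 ≤ k - 2 * ω := by
      by_contra! ht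
      exact h ⟨⟨ω, by omega⟩, by omega, by omega⟩
    rw [show min 1 (k - 2 * ω) = 1 by omega]
    push_cast [Nat.cast_sub hA, Nat.cast_sub hωk, Nat.cast_sub (show 2 ≤ 2 * m by omega)]
    ring

theorem CErOmega_ne_bot_iff {m k i ω : ℕ} : CErOmega m k i ω ≠ ⊥ ↔
    ∃ b : CEMon m, ¬ CEBad m b ∧ CElen m b = k ∧ CEdeg m b = i ∧ CEwt m b = ω :=
  Finsupp.supported_ne_bot_iff

open Classical in
theorem reduced_max_degree_general (m k ω : ℕ) (hm : 1 ≤ m) (hω' : ω ≤ min (k / 2) m) :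
    ∃ D : ℕ, IsGreatest {i : ℕ | CErOmega m k i ω ≠ ⊥} D ∧
      (D : ℤ) =
        if Even k ∧ ω = k / 2 ∧ k / 2 ≤ m then
          4 * (ω : ℤ) * m - ((ω : ℤ) ^ 2 + 2 * ω)
        else
          (2 * (m : ℤ) - 2) * k - ((ω : ℤ) ^ 2 - 2 * ω - 2) := by
  refine ⟨CEmaxDeg m k ω, ⟨CErOmega_ne_bot_iff.2 (exists_CEdeg_eq_CEmaxDeg hm hω'), ?_⟩,
    CEmaxDeg_cast hm hω'⟩
  rintro i hi
  obtain ⟨b, hb, hlen, rfl, hwt⟩ := CErOmega_ne_bot_iff.1 hi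
  exact CEdeg_le_CEmaxDeg hb hlen hwt

open Classical in
/-- For every `m ≥ 1`, `k ≥ 1`, and weight `0 < ω ≤ min {⌊k/2⌋, m}`, the largest
cohomological degree `i` with `ʳΩ_k^{i,ω}(ℂP^m) ≠ 0` equals `4ωm - (ω² + 2ω)` if `k` is even,
`ω = k/2` and `k/2 ≤ m`, and equals `(2m-2)k - (ω² - 2ω - 2)` otherwise. -/
theorem reduced_max_degree (m k ω : ℕ) (hm : 1 ≤ m) (hk : 1 ≤ k)
    (hω : 0 < ω) (hω' : ω ≤ min (k / 2) m) :
    ∃ D : ℕ, IsGreatest {i : ℕ | CErOmega m k i ω ≠ ⊥} D ∧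
      (D : ℤ) =
        if Even k ∧ ω = k / 2 ∧ k / 2 ≤ m then
          4 * (ω : ℤ) * m - ((ω : ℤ) ^ 2 + 2 * ω)
        else
          (2 * (m : ℤ) - 2) * k - ((ω : ℤ) ^ 2 - 2 * ω - 2) :=
  reduced_max_degree_general m k ω hm hω'
end

section
/- For every m ≥ 1, k ≥ 1, and weight ω with 0 < ω ≤ min{⌊k/2⌋, m}, the smallest cohomological degree i such that ʳΩ_k^{i,ω}(CP^m) ≠ 0 equals 2ωm + ω(ω - 2). -/
lemma aux_sum_range_card_le (T : Finset ℕ) : ∑ i ∈ Finset.range T.card, i ≤ ∑ j ∈ T, j := by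
  induction T using Finset.strongInduction with
  | _ T ih =>
    rcases T.eq_empty_or_nonempty with rfl | hT
    · simp
    · have hMem := T.max'_mem hT
      set M := T.max' hT
      have h1 := ih (T.erase M) (Finset.erase_ssubset hMem)
      have hcard : (T.erase M).card = T.card - 1 := Finset.card_erase_of_mem hMem
      have hsum : ∑ j ∈ T, j = M + ∑ j ∈ T.erase M, j := (Finset.add_sum_erase _ _ hMem).symm
      have hcardle : T.card ≤ M + 1 := by
        have hsub : T ⊆ Finset.range (M + 1) := fun x hx =>
          Finset.mem_range.2 (Nat.lt_succ_of_le (T.le_max' x hx))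
        simpa using Finset.card_le_card hsub
      have hpos : 1 ≤ T.card := Finset.card_pos.2 hT
      have hrange : ∑ i ∈ Finset.range T.card, i
          = ∑ i ∈ Finset.range (T.card - 1), i + (T.card - 1) := by
        conv_lhs => rw [show T.card = (T.card - 1) + 1 by omega]
        rw [Finset.sum_range_succ]
      rw [hcard] at h1
      omega


lemma aux_deg_lb (m ω : ℕ) (hm : 1 ≤ m) (b : CEMon m) (hw : CEwt m b = ω) :
    ω * (2 * m - 1) + ω * (ω - 1) ≤ CEdeg m b := by
  have hterm : ∀ j ∈ b.2, 2 * m + 2 * j.val - 1 = (2 * m - 1) + 2 * j.val := by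
    intro j _; omega
  have h1 : ∑ j ∈ b.2, (2 * m + 2 * j.val - 1)
      = ω * (2 * m - 1) + 2 * ∑ j ∈ b.2, j.val := by
    rw [Finset.sum_congr rfl hterm, Finset.sum_add_distrib, Finset.sum_const,
      ← Finset.mul_sum]
    have : b.2.card = ω := hw
    rw [this, smul_eq_mul]
  have h2 : ∑ i ∈ Finset.range ω, i ≤ ∑ j ∈ b.2, j.val := by
    have himg : (b.2.image Fin.val).card = ω := by
      rw [Finset.card_image_of_injective _ Fin.val_injective]; exact hw
    have h := aux_sum_range_card_le (b.2.image Fin.val)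
    rwa [himg, Finset.sum_image (fun x _ y _ h => Fin.val_injective h)] at h
  have hgauss := Finset.sum_range_id_mul_two ω
  calc ω * (2 * m - 1) + ω * (ω - 1)
      = ω * (2 * m - 1) + (∑ i ∈ Finset.range ω, i) * 2 := by rw [hgauss]
    _ ≤ ω * (2 * m - 1) + 2 * ∑ j ∈ b.2, j.val := by omega
    _ = ∑ j ∈ b.2, (2 * m + 2 * j.val - 1) := h1.symm
    _ ≤ CEdeg m b := Nat.le_add_left _ _

lemma aux_witness (m k ω : ℕ) (hm : 1 ≤ m) (hω : 0 < ω) (hωm : ω ≤ m) (h2ω : 2 * ω ≤ k) :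
    ∃ b : CEMon m, b.1 (Fin.last m) = 0 ∧ Fin.last m ∉ b.2 ∧ CElen m b = k ∧
      CEdeg m b = ω * (2 * m - 1) + ω * (ω - 1) ∧ CEwt m b = ω := by
  have hle : ω ≤ m + 1 := by omega
  refine ⟨(Pi.single 0 (k - 2 * ω),
      Finset.univ.map ⟨Fin.castLE hle, Fin.castLE_injective hle⟩), ?_, ?_, ?_, ?_, ?_⟩
  · exact Pi.single_eq_of_ne (by simp [Fin.ext_iff]; omega) _
  · simp only [Finset.mem_map, Finset.mem_univ, true_and, not_exists]
    intro i hi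
    have h2 := congrArg Fin.val hi
    simp [Fin.val_last] at h2
    omega
  · simp only [CElen, Finset.card_map, Finset.card_univ, Fintype.card_fin,
      Finset.sum_pi_single']
    simp
    omega
  · simp only [CEdeg, Finset.card_map, Finset.sum_map, Function.Embedding.coeFn_mk,
      Fin.coe_castLE]
    have hfirst : (∑ i : Fin (m + 1), 2 * i.val * (Pi.single (0 : Fin (m+1)) (k - 2 * ω) : Fin (m+1) → ℕ) i) = 0 := by
      apply Finset.sum_eq_zero
      intro i _
      rcases eq_or_ne i 0 with rfl | hi
      · simp
      · rw [Pi.single_eq_of_ne hi]; ring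
    rw [hfirst, zero_add, Fin.sum_univ_eq_sum_range (fun i => 2 * m + 2 * i - 1)]
    have hterm : ∀ i ∈ Finset.range ω, 2 * m + 2 * i - 1 = (2 * m - 1) + 2 * i := by
      intro i _; omega
    rw [Finset.sum_congr rfl hterm, Finset.sum_add_distrib, Finset.sum_const,
      Finset.card_range, ← Finset.mul_sum, smul_eq_mul, ← Finset.sum_range_id_mul_two ω]
    ring
  · simp [CEwt]

/-- For every `m ≥ 1`, `k ≥ 1`, and weight `0 < ω ≤ min {⌊k/2⌋, m}`, the
smallest cohomological degree `i` with `ʳΩ_k^{i,ω}(ℂP^m) ≠ 0` equals `2ωm + ω(ω - 2)`. -/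
theorem reduced_min_degree (m k ω : ℕ) (hm : 1 ≤ m) (hk : 1 ≤ k)
    (hω : 0 < ω) (hω' : ω ≤ min (k / 2) m) :
    ∃ D : ℕ, IsLeast {i : ℕ | CErOmega m k i ω ≠ ⊥} D ∧
      (D : ℤ) = 2 * (ω : ℤ) * m + (ω : ℤ) * ((ω : ℤ) - 2) := by
  have hω1 : ω ≤ k / 2 := le_trans hω' (min_le_left _ _)
  have hωm : ω ≤ m := le_trans hω' (min_le_right _ _)
  have h2ω : 2 * ω ≤ k := by omega
  refine ⟨ω * (2 * m - 1) + ω * (ω - 1), ⟨?_, ?_⟩, ?_⟩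
  · obtain ⟨b, hb0, hbS, hlen, hdeg, hwt⟩ := aux_witness m k ω hm hω hωm h2ω
    intro hbot
    have hmem : Finsupp.single b (1 : ℚ) ∈ CErOmega m k (ω * (2 * m - 1) + ω * (ω - 1)) ω := by
      apply Finsupp.single_mem_supported
      exact ⟨by simp [CEBad, hb0, hbS], hlen, hdeg, hwt⟩
    rw [hbot] at hmem
    simp only [Submodule.mem_bot] at hmem
    have := DFunLike.congr_fun hmem b
    rw [Finsupp.single_eq_same] at this
    exact one_ne_zero this
  · intro i hi
    by_contra hlt
    push_neg at hlt
    apply hi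
    have hset : {b : CEMon m | ¬ CEBad m b ∧ CElen m b = k ∧ CEdeg m b = i ∧ CEwt m b = ω}
        = (∅ : Set (CEMon m)) := by
      ext b
      simp only [Set.mem_setOf_eq, Set.mem_empty_iff_false, iff_false, not_and]
      intro _ _ hdeg hwt
      have := aux_deg_lb m ω hm b hwt
      omega
    rw [CErOmega, hset, Finsupp.supported_empty]
  · have h1 : (1 : ℕ) ≤ 2 * m := by omega
    push_cast [Nat.cast_sub h1, Nat.cast_sub (show 1 ≤ ω by omega)]
    ring
end

section
/- For every m ≥ 1 and k ≥ 1, the reduced complex vanishes above degree (2m-2)k + 3: ʳΩ_k^{i,ω}(CP^m) = 0 for every weight ω whenever i > (2m-2)k + 3. -/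

private lemma aux_range_sum (n : ℕ) : ∀ T : Finset ℕ, T ⊆ Finset.range n →
    2 * (∑ t ∈ T, t) + T.card * T.card + T.card ≤ 2 * n * T.card := by
  induction n with
  | zero =>
    intro T hT
    have : T = ∅ := Finset.subset_empty.mp (by simpa using hT)
    subst this; simp
  | succ n ih =>
    intro T hT
    by_cases hn : n ∈ T
    · have hT' : T.erase n ⊆ Finset.range n := by
        intro x hx
        have hx1 := Finset.mem_of_mem_erase hx
        have hx2 := Finset.ne_of_mem_erase hx
        have := Finset.mem_range.mp (hT hx1)
        exact Finset.mem_range.mpr (by omega)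
      have ihe := ih (T.erase n) hT'
      have hsum : ∑ t ∈ T, t = n + ∑ t ∈ T.erase n, t :=
        (Finset.add_sum_erase T id hn).symm
      have hcard : T.card = (T.erase n).card + 1 := by
        rw [Finset.card_erase_of_mem hn]
        have : 1 ≤ T.card := Finset.card_pos.mpr ⟨n, hn⟩
        omega
      set c := (T.erase n).card with hc
      rw [hsum, hcard]
      nlinarith [ihe]
    · have hT' : T ⊆ Finset.range n := by
        intro x hx
        have hxn : x ≠ n := fun h => hn (h ▸ hx)
        have := Finset.mem_range.mp (hT hx)
        exact Finset.mem_range.mpr (by omega)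
      have := ih T hT'
      nlinarith [this]

private lemma ce_deg_le (m k : ℕ) (hm : 1 ≤ m) (b : CEMon m) (hb : ¬ CEBad m b)
    (hl : CElen m b = k) : CEdeg m b ≤ (2 * m - 2) * k + 3 := by
  obtain ⟨m', rfl⟩ : ∃ m', m = m' + 1 := ⟨m - 1, by omega⟩
  rw [CEBad, not_or] at hb
  obtain ⟨hb1, hb2⟩ := hb
  have helast : b.1 (Fin.last (m' + 1)) ≤ 1 := by omega
  -- the image of b.2 under Fin.val
  set T : Finset ℕ := b.2.image Fin.val with hT
  have hinj : Set.InjOn Fin.val (b.2 : Set (Fin (m' + 2))) := fun a _ c _ h => Fin.val_injective h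
  have hcard : T.card = b.2.card := Finset.card_image_of_injOn hinj
  have hTsub : T ⊆ Finset.range (m' + 1) := by
    intro x hx
    rw [hT, Finset.mem_image] at hx
    obtain ⟨j, hj, rfl⟩ := hx
    have hjne : j ≠ Fin.last (m' + 1) := fun h => hb2 (h ▸ hj)
    have : j.val < m' + 2 := j.isLt
    have : j.val ≠ m' + 1 := fun h => hjne (Fin.ext h)
    exact Finset.mem_range.mpr (by omega)
  have hTsum : ∑ t ∈ T, t = ∑ j ∈ b.2, j.val :=
    Finset.sum_image (fun a _ c _ h => Fin.val_injective h)
  have hrange := aux_range_sum (m' + 1) T hTsub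
  rw [hcard, hTsum] at hrange
  set c := b.2.card with hc
  set J := ∑ j ∈ b.2, (j : ℕ) with hJ
  -- degree pieces
  rw [CEdeg]
  set E := ∑ i : Fin (m' + 2), b.1 i with hE
  have hEk : E + 2 * c = k := by rw [hE, hc, ← hl, CElen]
  -- bound the even part
  have hEsplit : E = (∑ i : Fin (m' + 1), b.1 i.castSucc) + b.1 (Fin.last (m' + 1)) := by
    rw [hE]; exact Fin.sum_univ_castSucc _
  have hD1 : (∑ i : Fin (m' + 2), 2 * i.val * b.1 i) ≤ 2 * m' * E + 2 := by
    rw [Fin.sum_univ_castSucc (n := m' + 1) (f := fun i : Fin (m' + 2) => 2 * i.val * b.1 i),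
      hEsplit]
    have h1 : ∑ i : Fin (m' + 1), 2 * (i.castSucc : Fin (m' + 2)).val * b.1 i.castSucc ≤
        ∑ i : Fin (m' + 1), 2 * m' * b.1 i.castSucc := by
      apply Finset.sum_le_sum
      intro i _
      have : (i.castSucc : Fin (m' + 2)).val ≤ m' := by
        simpa using Nat.lt_succ_iff.mp i.isLt
      exact Nat.mul_le_mul_right _ (by omega)
    have h2 : 2 * (Fin.last (m' + 1)).val * b.1 (Fin.last (m' + 1)) ≤
        2 * m' * b.1 (Fin.last (m' + 1)) + 2 := by
      simp only [Fin.val_last]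
      nlinarith [helast]
    calc _ ≤ (∑ i : Fin (m' + 1), 2 * m' * b.1 i.castSucc) +
          (2 * m' * b.1 (Fin.last (m' + 1)) + 2) := Nat.add_le_add h1 h2
      _ = 2 * m' * ((∑ i : Fin (m' + 1), b.1 i.castSucc) + b.1 (Fin.last (m' + 1))) + 2 := by
          rw [Nat.mul_add, Finset.mul_sum]; exact (Nat.add_assoc _ _ _).symm
  -- exact value of the odd part
  have hD2 : (∑ j ∈ b.2, (2 * (m' + 1) + 2 * j.val - 1)) = (2 * m' + 1) * c + 2 * J := by
    have : ∀ j ∈ b.2, 2 * (m' + 1) + 2 * (j : Fin (m' + 2)).val - 1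
        = (2 * m' + 1) + 2 * j.val := by intro j _; omega
    rw [Finset.sum_congr rfl this, Finset.sum_add_distrib, Finset.sum_const,
      smul_eq_mul, hc, hJ, Finset.mul_sum]
    ring
  rw [hD2]
  have hgoal : 2 * (m' + 1) - 2 = 2 * m' := by omega
  rw [hgoal]
  have hmk : 2 * m' * k = 2 * m' * E + 2 * (2 * m' * c) := by rw [← hEk]; ring
  have hcc : 2 * c ≤ c * c + 1 := by nlinarith
  have hrange' : 2 * J + c * c + c ≤ 2 * m' * c + 2 * c := by
    have heq : 2 * (m' + 1) * c = 2 * m' * c + 2 * c := by ring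
    linarith [hrange, heq]
  linarith [hD1, hrange', hcc, hmk]

/-- For every `m ≥ 1` and `k ≥ 1`, the reduced complex vanishes above degree
`(2m-2)k + 3`: `ʳΩ_k^{i,ω}(ℂP^m) = 0` for every weight `ω` whenever `i > (2m-2)k + 3`. -/
theorem reduced_top_vanishing (m k : ℕ) (hm : 1 ≤ m) (hk : 1 ≤ k) :
    ∀ i ω : ℕ, (2 * m - 2) * k + 3 < i → CErOmega m k i ω = ⊥ := by
  intro i ω hi
  rw [CErOmega]
  have hset : {b : CEMon m | ¬ CEBad m b ∧ CElen m b = k ∧ CEdeg m b = i ∧ CEwt m b = ω}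
      = (∅ : Set (CEMon m)) := by
    ext b
    simp only [Set.mem_setOf_eq, Set.mem_empty_iff_false, iff_false, not_and]
    intro hb hl hd
    exfalso
    have := ce_deg_le m k hm b hb hl
    omega
  rw [hset, Finsupp.supported_empty]
end

section
/- For every m ≥ 1, k ≥ 1, and weight ω ≥ 4, the weight-ω part of the reduced complex vanishes in degrees above (2m-2)k - 6: ʳΩ_k^{i,ω}(CP^m) = 0 whenever i > (2m-2)k - 6. -/


lemma L1 (T : Finset ℕ) : T.card * (T.card - 1) ≤ 2 * ∑ t ∈ T, t := by
  induction T using Finset.strongInduction with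
  | _ T ih =>
    rcases T.eq_empty_or_nonempty with rfl | hT
    · simp
    · have hM : T.max' hT ∈ T := T.max'_mem hT
      have h1 := ih _ (Finset.erase_ssubset hM)
      have hcard : (T.erase (T.max' hT)).card = T.card - 1 := Finset.card_erase_of_mem hM
      have hle : T.card - 1 ≤ T.max' hT := by
        have hsub : T ⊆ Finset.range (T.max' hT + 1) := fun t ht =>
          Finset.mem_range.mpr (Nat.lt_succ_of_le (Finset.le_max' T t ht))
        have := Finset.card_le_card hsub
        simp only [Finset.card_range] at this; omega
      have hsum : ∑ t ∈ T, t = T.max' hT + ∑ t ∈ T.erase (T.max' hT), t :=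
        (Finset.add_sum_erase _ _ hM).symm
      have hpos : 1 ≤ T.card := Finset.card_pos.mpr hT
      rw [hcard] at h1
      rw [hsum]
      obtain ⟨c, hc⟩ : ∃ c, T.card = c + 1 := ⟨T.card - 1, by omega⟩
      rw [hc] at h1 ⊢
      simp only [Nat.add_sub_cancel] at h1 ⊢
      rcases Nat.eq_zero_or_pos c with rfl | hcpos
      · simp
      · obtain ⟨d, rfl⟩ : ∃ d, c = d + 1 := ⟨c - 1, by omega⟩
        simp only [Nat.add_sub_cancel] at h1
        have hle' : d + 1 ≤ T.max' hT := by omega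
        nlinarith [hle', h1]

lemma L2 (T : Finset ℕ) (h0 : 0 ∉ T) : T.card * (T.card + 1) ≤ 2 * ∑ t ∈ T, t := by
  have h := L1 (insert 0 T)
  rw [Finset.card_insert_of_notMem h0, Finset.sum_insert h0] at h
  rw [mul_comm]
  simpa using h

lemma L3 (m : ℕ) (S : Finset (Fin (m + 1))) (h : Fin.last m ∉ S) :
    S.card * (S.card + 1) ≤ 2 * ∑ j ∈ S, (m - j.val) := by
  have hinj : ∀ x ∈ S, ∀ y ∈ S, m - x.val = m - y.val → x = y := by
    intro x hx y hy hxy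
    have hx' : x.val < m + 1 := x.isLt
    have hy' : y.val < m + 1 := y.isLt
    exact Fin.ext (by omega)
  have hsum : ∑ t ∈ S.image (fun j : Fin (m+1) => m - j.val), t
      = ∑ j ∈ S, (m - j.val) := Finset.sum_image hinj
  have hcard : (S.image (fun j : Fin (m+1) => m - j.val)).card = S.card :=
    Finset.card_image_of_injOn hinj
  have h0 : 0 ∉ S.image (fun j : Fin (m+1) => m - j.val) := by
    simp only [Finset.mem_image, not_exists, not_and]
    intro j hj hj0
    have hlt : j.val < m + 1 := j.isLt
    have : j = Fin.last m := Fin.ext (by simp [Fin.val_last]; omega)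
    exact h (this ▸ hj)
  have := L2 _ h0
  rw [hcard, hsum] at this
  exact this

lemma key (m : ℕ) (b : CEMon m) (hbad : ¬ CEBad m b) (hw : 4 ≤ CEwt m b) :
    (CEdeg m b : ℤ) ≤ (2 * (m : ℤ) - 2) * (CElen m b : ℤ) - 6 := by
  rw [CEBad, not_or, not_le] at hbad
  obtain ⟨he, hS⟩ := hbad
  have he' : b.1 (Fin.last m) ≤ 1 := by omega
  set e := b.1 with he_def
  set S := b.2 with hS_def
  set ω := S.card with hω_def
  have hω4 : 4 ≤ ω := hw
  -- Part A : the v-contribution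
  have A : ∑ i : Fin (m + 1), (2 * (i.val : ℤ)) * (e i : ℤ)
      ≤ (2 * (m : ℤ) - 2) * ∑ i : Fin (m + 1), (e i : ℤ) + 2 := by
    have hA : ∑ i : Fin (m + 1), (2 * (i.val : ℤ)) * (e i : ℤ)
        ≤ ∑ i : Fin (m + 1), ((2 * (m : ℤ) - 2) * (e i : ℤ)
            + if i = Fin.last m then 2 else 0) := by
      apply Finset.sum_le_sum
      intro i _
      by_cases hi : i = Fin.last m
      · subst hi
        simp only [if_pos rfl, Fin.val_last, if_true]
        have h1 : (e (Fin.last m) : ℤ) ≤ 1 := by exact_mod_cast he'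
        nlinarith [h1]
      · have hival : i.val < m := by
          have h1 : i.val < m + 1 := i.isLt
          have : i.val ≠ m := fun h => hi (Fin.ext (by simp [Fin.val_last, h]))
          omega
        simp only [if_neg hi, add_zero]
        have h1 : (2 : ℤ) * i.val ≤ 2 * m - 2 := by omega
        exact mul_le_mul_of_nonneg_right h1 (by positivity)
    rw [Finset.sum_add_distrib, Finset.sum_ite_eq' Finset.univ (Fin.last m)
      (fun _ => (2:ℤ)), if_pos (Finset.mem_univ _), ← Finset.mul_sum] at hA
    exact hA
  -- Part B : the w-contribution
  have hN := L3 m S hS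
  set N := ∑ j ∈ S, (m - j.val) with hN_def
  have hNZ : (ω : ℤ) * (ω + 1) ≤ 2 * (N : ℤ) := by exact_mod_cast hN
  have B : ∑ j ∈ S, ((2 * m + 2 * j.val - 1 : ℕ) : ℤ)
      ≤ (2 * (m : ℤ) - 2) * (2 * ω) - 8 := by
    have hrw : ∑ j ∈ S, ((2 * m + 2 * j.val - 1 : ℕ) : ℤ)
        = (4 * (m : ℤ) - 1) * ω - 2 * (N : ℤ) := by
      have : ∀ j ∈ S, ((2 * m + 2 * j.val - 1 : ℕ) : ℤ)
          = (4 * (m : ℤ) - 1) - 2 * ((m - j.val : ℕ) : ℤ) := by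
        intro j hj
        have hjm : j.val < m := by
          have h1 : j.val < m + 1 := j.isLt
          have h2 : j ≠ Fin.last m := fun h => hS (h ▸ hj)
          have : j.val ≠ m := fun h => h2 (Fin.ext (by simp [Fin.val_last, h]))
          omega
        omega
      rw [Finset.sum_congr rfl this, Finset.sum_sub_distrib, Finset.sum_const,
        ← Finset.mul_sum, hN_def, Nat.cast_sum]
      push_cast
      ring
    rw [hrw]
    nlinarith [hNZ, hω4]
  -- combine
  have hcast : (CEdeg m b : ℤ)
      = ∑ i : Fin (m + 1), (2 * (i.val : ℤ)) * (e i : ℤ)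
        + ∑ j ∈ S, ((2 * m + 2 * j.val - 1 : ℕ) : ℤ) := by
    rw [CEdeg]
    push_cast
    ring
  have hlen : (CElen m b : ℤ) = (∑ i : Fin (m + 1), (e i : ℤ)) + 2 * ω := by
    rw [CElen]; push_cast; ring
  rw [hcast, hlen]
  nlinarith [A, B]

/-- For every `m ≥ 1`, `k ≥ 1`, and weight `ω ≥ 4`, the weight-`ω` part of the
reduced complex vanishes in degrees above `(2m-2)k - 6`:
`ʳΩ_k^{i,ω}(ℂP^m) = 0` whenever `i > (2m-2)k - 6`. -/
theorem reduced_high_weight_vanishing (m k : ℕ) (hm : 1 ≤ m) (hk : 1 ≤ k) :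
    ∀ i ω : ℕ, 4 ≤ ω → (2 * (m : ℤ) - 2) * k - 6 < (i : ℤ) → CErOmega m k i ω = ⊥ := by
  intro i ω hω hlt
  rw [CErOmega]
  have hset : {b : CEMon m | ¬ CEBad m b ∧ CElen m b = k ∧ CEdeg m b = i ∧ CEwt m b = ω}
      = (∅ : Set (CEMon m)) := by
    ext b
    simp only [Set.mem_setOf_eq, Set.mem_empty_iff_false, iff_false]
    rintro ⟨hbad, hlen, hdeg, hwt⟩
    have hkey := key m b hbad (by rw [hwt]; exact hω)
    rw [hlen, hdeg] at hkey
    linarith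
  rw [hset, Finsupp.supported_empty]
end
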